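/- arXiv:1502.07845 — 2 statements merged into one kernel-verified Lean document; each statement's English description precedes it below -/
import Mathlib

section
/- Let K > 0. There exist λ₀ > 0 and C > 0 such that the following holds for every traceless real 2×2 matrix P = [[a,b],[c,−a]] with ‖P‖ ≤ K and every λ ∈ [0,λ₀]: for each θ ∈ ℝ there is a unique S_{λP}(θ) ∈ ℝ with |S_{λP}(θ) − θ| < π/2 such that the unit vector e_{S_{λP}(θ)} equals ± exp(λP)e_θ/‖exp(λP)e_θ‖, and it satisfies |S_{λP}(θ) − θ − λ p(θ) − (λ²/2) p(θ) p'(θ)| ≤ C λ³, where p(θ) = −a sin(2θ) − b sin²(θ) + c cos²(θ). -/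
/-!
For traceless `P` one has `P ^ 2 = -det P • 1`, so `exp (t • P) = C • 1 + S • t • P`, where `C` and
`S` are power series in `μ = -t ^ 2 det P` equal to `1 + O(t ^ 2)`. In the moving frame
`(e_θ, e_{θ+π/2})` the matrix acts by `P e_θ = -p'(θ)/2 • e_θ + p(θ) • e_{θ+π/2}`, hence
`exp (t • P) e_θ = x • e_θ + y • e_{θ+π/2}` with `x = C - t S p'/2 ≥ 1/2` and `y = t S p`. The
lifted angle is then exactly `θ + arctan (y / x)`, and `arctan u = u + O(u ^ 3)` together with
`y / x = t p + t ^ 2 p p' / 2 + O(t ^ 3)` gives the expansion.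
-/

noncomputable section

open Real

/-- Euclidean norm of a vector in `ℝ²` (represented as `Fin 2 → ℝ`). -/
def vnorm (v : Fin 2 → ℝ) : ℝ := Real.sqrt (v 0 ^ 2 + v 1 ^ 2)

/-- The unit vector `e_θ = (cos θ, sin θ)`. -/
def uvec (θ : ℝ) : Fin 2 → ℝ := ![Real.cos θ, Real.sin θ]

/-- The function `p(θ) = -a sin(2θ) - b sin²θ + c cos²θ` attached to the traceless
matrix `P = [[a,b],[c,-a]]`. -/
def pfun (P : Matrix (Fin 2) (Fin 2) ℝ) (θ : ℝ) : ℝ :=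
  -(P 0 0) * Real.sin (2 * θ) - (P 0 1) * Real.sin θ ^ 2 + (P 1 0) * Real.cos θ ^ 2

open scoped Nat Matrix

lemma summable_pow_div_factorial_comp {d : ℕ → ℕ} (hd : ∀ k, k ≤ d k) (μ : ℝ) :
    Summable fun k => μ ^ k / (d k)! := by
  refine .of_norm_bounded (Real.summable_pow_div_factorial |μ|) fun k => ?_
  rw [norm_div, norm_pow, Real.norm_eq_abs, RCLike.norm_natCast]
  gcongr
  exact hd k

lemma abs_tsum_pow_div_factorial_comp_sub_one_le {d : ℕ → ℕ} (hd0 : d 0 ≤ 1)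
    (hd : ∀ k, k ≤ d k) {μ : ℝ} (hμ : |μ| ≤ 1) :
    |∑' k, μ ^ k / (d k)! - 1| ≤ 2 * |μ| := by
  have hsum := summable_pow_div_factorial_comp hd μ
  have hsum1 := (summable_nat_add_iff 1).2 hsum
  have hexp : HasSum (fun k => |μ| ^ (k + 1) / (k + 1)!) (exp |μ| - 1) := by
    have h := (hasSum_nat_add_iff' 1).2
      (Real.exp_eq_exp_ℝ ▸ NormedSpace.expSeries_div_hasSum_exp |μ|)
    simpa using h
  rw [hsum.tsum_eq_zero_add, pow_zero, Nat.factorial_eq_one.2 hd0, Nat.cast_one, div_one,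
    add_sub_cancel_left]
  calc |∑' k, μ ^ (k + 1) / (d (k + 1))!|
      ≤ ∑' k, |μ| ^ (k + 1) / (k + 1)! := by
        refine (norm_tsum_le_tsum_norm hsum1.norm).trans ?_
        refine Summable.tsum_le_tsum (fun k => ?_) hsum1.norm hexp.summable
        rw [norm_div, norm_pow, Real.norm_eq_abs, RCLike.norm_natCast]
        gcongr
        exact hd _
    _ = exp |μ| - 1 := hexp.tsum_eq
    _ ≤ |exp |μ| - 1| := le_abs_self _
    _ ≤ 2 * |μ| := by simpa using abs_exp_sub_one_le (x := |μ|) (by rwa [abs_abs])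

/- For `μ = s ^ 2` these are `cosh s` and `sinh s / s`, for `μ = -s ^ 2` they are `cos s` and
`sin s / s`; the power series covers both signs at once. -/
def expEvenCoeff (μ : ℝ) : ℝ := ∑' k : ℕ, μ ^ k / (2 * k)!

def expOddCoeff (μ : ℝ) : ℝ := ∑' k : ℕ, μ ^ k / (2 * k + 1)!

lemma hasSum_expEvenCoeff (μ : ℝ) : HasSum (fun k : ℕ => μ ^ k / (2 * k)!) (expEvenCoeff μ) :=
  (summable_pow_div_factorial_comp (by omega) μ).hasSum

lemma hasSum_expOddCoeff (μ : ℝ) : HasSum (fun k : ℕ => μ ^ k / (2 * k + 1)!) (expOddCoeff μ) :=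
  (summable_pow_div_factorial_comp (by omega) μ).hasSum

lemma abs_expEvenCoeff_sub_one_le {μ : ℝ} (hμ : |μ| ≤ 1) : |expEvenCoeff μ - 1| ≤ 2 * |μ| :=
  abs_tsum_pow_div_factorial_comp_sub_one_le (d := fun k => 2 * k) (by simp) (by omega) hμ

lemma abs_expOddCoeff_sub_one_le {μ : ℝ} (hμ : |μ| ≤ 1) : |expOddCoeff μ - 1| ≤ 2 * |μ| :=
  abs_tsum_pow_div_factorial_comp_sub_one_le (d := fun k => 2 * k + 1) (by simp) (by omega) hμ

theorem NormedSpace.exp_eq_of_mul_self_eq_smul_one {𝔸 : Type*} [Ring 𝔸] [Algebra ℝ 𝔸]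
    [TopologicalSpace 𝔸] [IsTopologicalRing 𝔸] [ContinuousSMul ℝ 𝔸] [T2Space 𝔸] {A : 𝔸} {μ : ℝ}
    (hA : A * A = μ • 1) :
    NormedSpace.exp A = expEvenCoeff μ • 1 + expOddCoeff μ • A := by
  have hpow (k : ℕ) : A ^ (2 * k) = μ ^ k • 1 := by
    rw [pow_mul, sq, hA, smul_pow, one_pow]
  rw [NormedSpace.exp_eq_tsum ℝ]
  refine HasSum.tsum_eq (.even_add_odd ?_ ?_)
  · convert (hasSum_expEvenCoeff μ).smul_const (1 : 𝔸) using 2 with k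
    rw [hpow, smul_smul, div_eq_inv_mul]
  · convert (hasSum_expOddCoeff μ).smul_const A using 2 with k
    rw [pow_succ, hpow, smul_mul_assoc, one_mul, smul_smul, div_eq_inv_mul]

theorem Matrix.mul_self_eq_smul_one_of_trace_eq_zero {R : Type*} [CommRing R]
    {P : Matrix (Fin 2) (Fin 2) R} (h : P.trace = 0) :
    P * P = (P 0 0 ^ 2 + P 0 1 * P 1 0) • 1 := by
  have h11 : P 1 1 = -P 0 0 := by rw [Matrix.trace_fin_two] at h; linear_combination h
  ext i j
  fin_cases i <;> fin_cases j <;> simp [Matrix.mul_apply, h11] <;> ring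

lemma hasDerivAt_pfun (P : Matrix (Fin 2) (Fin 2) ℝ) (θ : ℝ) :
    HasDerivAt (pfun P) (-2 * P 0 0 * cos (2 * θ) - (P 0 1 + P 1 0) * sin (2 * θ)) θ := by
  have h2 : HasDerivAt (fun t : ℝ => 2 * t) 2 θ := by simpa using (hasDerivAt_id θ).const_mul 2
  have := (((h2.sin).const_mul (-P 0 0)).sub ((hasDerivAt_sin θ).pow 2 |>.const_mul (P 0 1))).add
    ((hasDerivAt_cos θ).pow 2 |>.const_mul (P 1 0))
  exact this.congr_deriv (by rw [sin_two_mul]; ring)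

lemma deriv_pfun (P : Matrix (Fin 2) (Fin 2) ℝ) (θ : ℝ) :
    deriv (pfun P) θ = -2 * P 0 0 * cos (2 * θ) - (P 0 1 + P 1 0) * sin (2 * θ) :=
  (hasDerivAt_pfun P θ).deriv

lemma uvec_add_pi_div_two (θ : ℝ) : uvec (θ + π / 2) = ![-sin θ, cos θ] := by
  simp [uvec, cos_add_pi_div_two, sin_add_pi_div_two]

lemma mulVec_uvec_of_trace_eq_zero {P : Matrix (Fin 2) (Fin 2) ℝ} (h : P.trace = 0) (θ : ℝ) :
    P *ᵥ uvec θ = (-deriv (pfun P) θ / 2) • uvec θ + pfun P θ • uvec (θ + π / 2) := by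
  have h11 : P 1 1 = -P 0 0 := by rw [Matrix.trace_fin_two] at h; linear_combination h
  rw [deriv_pfun, uvec_add_pi_div_two, pfun, cos_two_mul', sin_two_mul]
  ext i
  fin_cases i <;> simp [uvec, Matrix.mulVec, dotProduct, h11]
  · linear_combination (-(P 0 0 * cos θ + P 0 1 * sin θ)) * sin_sq_add_cos_sq θ
  · linear_combination (-(P 1 0 * cos θ - P 0 0 * sin θ)) * sin_sq_add_cos_sq θ

lemma abs_pfun_le {P : Matrix (Fin 2) (Fin 2) ℝ} {K : ℝ} (hP : ∀ i j, |P i j| ≤ K) (θ : ℝ) :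
    |pfun P θ| ≤ 3 * K := by
  have hK : 0 ≤ K := (abs_nonneg _).trans (hP 0 0)
  calc |pfun P θ| ≤ |P 0 0| * |sin (2 * θ)| + |P 0 1| * sin θ ^ 2 + |P 1 0| * cos θ ^ 2 := by
        refine (abs_add_le _ _).trans ((add_le_add_left (abs_sub _ _) _).trans (le_of_eq ?_))
        simp [abs_mul]
    _ ≤ K * 1 + K * 1 + K * 1 := by
        gcongr
        exacts [hP 0 0, abs_sin_le_one _, hP 0 1, sin_sq_le_one _, hP 1 0, cos_sq_le_one _]
    _ = 3 * K := by ring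

lemma abs_deriv_pfun_le {P : Matrix (Fin 2) (Fin 2) ℝ} {K : ℝ} (hP : ∀ i j, |P i j| ≤ K)
    (θ : ℝ) : |deriv (pfun P) θ| ≤ 4 * K := by
  have hK : 0 ≤ K := (abs_nonneg _).trans (hP 0 0)
  rw [deriv_pfun]
  calc _ ≤ 2 * |P 0 0| * |cos (2 * θ)| + (|P 0 1| + |P 1 0|) * |sin (2 * θ)| := by
        refine (abs_sub _ _).trans ?_
        simp only [abs_mul, abs_neg, abs_two]
        gcongr
        exact abs_add_le _ _
    _ ≤ 2 * K * 1 + (K + K) * 1 := by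
        gcongr
        exacts [hP 0 0, abs_cos_le_one _, hP 0 1, hP 1 0, abs_sin_le_one _]
    _ = 4 * K := by ring

lemma smul_uvec_add_smul_uvec_add_pi_div_two {x : ℝ} (hx : 0 < x) (y θ : ℝ) :
    x • uvec θ + y • uvec (θ + π / 2) = √(x ^ 2 + y ^ 2) • uvec (θ + arctan (y / x)) := by
  have hr : √(x ^ 2 + y ^ 2) = x * √(1 + (y / x) ^ 2) := by
    rw [show x ^ 2 + y ^ 2 = x ^ 2 * (1 + (y / x) ^ 2) by field_simp, sqrt_mul (sq_nonneg x),
      sqrt_sq hx.le]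
  rw [uvec_add_pi_div_two, hr]
  ext i
  fin_cases i <;> simp [uvec, cos_add, sin_add, cos_arctan, sin_arctan, sub_eq_add_neg] <;>
    field_simp

lemma eq_of_smul_uvec_eq_smul_uvec {r c S T θ : ℝ} (hS : |S - θ| < π / 2) (hT : |T - θ| < π / 2)
    (hc : c ≠ 0) (h : r • uvec T = c • uvec S) : S = T := by
  have hcos := congrFun h 0
  have hsin := congrFun h 1
  simp only [uvec, Pi.smul_apply, Matrix.cons_val_zero, Matrix.cons_val_one, smul_eq_mul]
    at hcos hsin
  have hsin_sub : c * sin (S - T) = 0 := by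
    rw [sin_sub]
    linear_combination sin T * hcos - cos T * hsin
  have hlt : |S - T| < π := by
    calc |S - T| = |(S - θ) - (T - θ)| := by ring_nf
      _ ≤ |S - θ| + |T - θ| := abs_sub _ _
      _ < π := by linarith
  rw [abs_lt] at hlt
  exact sub_eq_zero.1 <| (sin_eq_zero_iff_of_lt_of_lt hlt.1 hlt.2).1 <|
    (mul_eq_zero.1 hsin_sub).resolve_left hc

lemma exists_smul_uvec_eq_iff_eq_add_arctan {x : ℝ} (hx : 0 < x) {y θ S : ℝ} :
    (|S - θ| < π / 2 ∧ ∃ c : ℝ, c ≠ 0 ∧ x • uvec θ + y • uvec (θ + π / 2) = c • uvec S) ↔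
      S = θ + arctan (y / x) := by
  have hT : |θ + arctan (y / x) - θ| < π / 2 := by
    rw [add_sub_cancel_left, abs_lt]
    exact ⟨neg_pi_div_two_lt_arctan _, arctan_lt_pi_div_two _⟩
  rw [smul_uvec_add_smul_uvec_add_pi_div_two hx]
  constructor
  · rintro ⟨hS, c, hc, h⟩
    exact eq_of_smul_uvec_eq_smul_uvec hS hT hc h
  · rintro rfl
    exact ⟨hT, _, (sqrt_pos.2 (by positivity)).ne', rfl⟩

lemma abs_arctan_sub_self_le (u : ℝ) : |arctan u - u| ≤ |u| ^ 3 := by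
  have hderiv (v : ℝ) (hv : v ∈ Set.uIcc 0 u) : ‖1 / (1 + v ^ 2) - 1‖ ≤ u ^ 2 := by
    have hvu : v ^ 2 ≤ u ^ 2 := by simpa using sq_le_sq.2 (Set.abs_sub_left_of_mem_uIcc hv)
    have hpos : 0 < 1 + v ^ 2 := by positivity
    rw [norm_eq_abs, abs_le]
    constructor
    · rw [le_sub_iff_add_le, le_div_iff₀ hpos]; nlinarith
    · rw [sub_le_iff_le_add, div_le_iff₀ hpos]; nlinarith
  have := (convex_uIcc 0 u).norm_image_sub_le_of_norm_hasDerivWithin_le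
    (fun v _ => ((hasDerivAt_arctan v).sub (hasDerivAt_id v)).hasDerivWithinAt) hderiv
    Set.left_mem_uIcc Set.right_mem_uIcc
  simpa [pow_succ, sq_abs, mul_comm] using this

lemma half_le_and_abs_arctan_div_sub_le {t K p d C S : ℝ} (ht : 0 ≤ t) (htK : t * K ≤ 1 / 16)
    (hp : |p| ≤ 3 * K) (hd : |d| ≤ 4 * K) (hC : |C - 1| ≤ 4 * (t * K) ^ 2)
    (hS : |S - 1| ≤ 4 * (t * K) ^ 2) :
    1 / 2 ≤ C - t * S * d / 2 ∧
      |arctan (t * S * p / (C - t * S * d / 2)) - t * p - t ^ 2 / 2 * p * d| ≤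
        1872 * K ^ 3 * t ^ 3 := by
  set ε := t * K
  have hK : 0 ≤ K := by linarith [abs_nonneg p]
  have hε : 0 ≤ ε := mul_nonneg ht hK
  have htp : |t * p| ≤ 3 * ε := by
    rw [abs_mul, abs_of_nonneg ht]; nlinarith
  have htd : |t * d| ≤ 4 * ε := by
    rw [abs_mul, abs_of_nonneg ht]; nlinarith
  have hS2 : |S| ≤ 2 := by
    nlinarith [abs_sub_abs_le_abs_sub S 1, abs_one (α := ℝ)]
  set x := C - t * S * d / 2 with hx_def
  set y := t * S * p with hy_def
  have hx : 1 / 2 ≤ x := by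
    have h1 : |S * (t * d)| ≤ 2 * (4 * ε) := by
      rw [abs_mul]; exact mul_le_mul hS2 htd (abs_nonneg _) (by norm_num)
    have h2 := (abs_le.1 hC).1
    have h3 := (abs_le.1 h1).2
    rw [hx_def]
    nlinarith
  have hx0 : 0 < x := by linarith
  have hy : |y| ≤ 6 * ε := by
    rw [hy_def, mul_comm t, mul_assoc, abs_mul]
    nlinarith [abs_nonneg S, abs_nonneg (t * p)]
  have hyx : |y / x| ≤ 12 * ε := by
    rw [abs_div, abs_of_pos hx0, div_le_iff₀ hx0]; nlinarith
  have hrem : |y / x - (t * p + t ^ 2 / 2 * p * d)| ≤ 144 * ε ^ 3 := by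
    have hSC : |S - C| ≤ 8 * ε ^ 2 := by
      calc |S - C| = |(S - 1) - (C - 1)| := by ring_nf
        _ ≤ |S - 1| + |C - 1| := abs_sub _ _
        _ ≤ 8 * ε ^ 2 := by linarith
    have hone : |1 + t * d / 2| ≤ 2 := by
      rw [abs_le] at htd ⊢; constructor <;> linarith
    have hsq : |S * (t * d) ^ 2 / 4| ≤ 8 * ε ^ 2 := by
      rw [abs_div, abs_mul, abs_pow, abs_of_pos (by norm_num : (0 : ℝ) < 4)]
      nlinarith [abs_nonneg S, abs_nonneg (t * d)]
    have hinner : |(S - C) * (1 + t * d / 2) + S * (t * d) ^ 2 / 4| ≤ 24 * ε ^ 2 :=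
      calc _ ≤ |S - C| * |1 + t * d / 2| + |S * (t * d) ^ 2 / 4| := by
            rw [← abs_mul]; exact abs_add_le _ _
        _ ≤ 8 * ε ^ 2 * 2 + 8 * ε ^ 2 := by gcongr
        _ = 24 * ε ^ 2 := by ring
    have hnum : y / x - (t * p + t ^ 2 / 2 * p * d) =
        t * p * ((S - C) * (1 + t * d / 2) + S * (t * d) ^ 2 / 4) / x := by
      field_simp
      ring
    rw [hnum, abs_div, abs_mul, abs_of_pos hx0, div_le_iff₀ hx0]
    calc |t * p| * |(S - C) * (1 + t * d / 2) + S * (t * d) ^ 2 / 4|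
        ≤ 3 * ε * (24 * ε ^ 2) := by gcongr
      _ ≤ 144 * ε ^ 3 * x := by nlinarith [pow_nonneg hε 3]
  refine ⟨hx, ?_⟩
  calc |arctan (y / x) - t * p - t ^ 2 / 2 * p * d|
      = |(arctan (y / x) - y / x) + (y / x - (t * p + t ^ 2 / 2 * p * d))| := by ring_nf
    _ ≤ |y / x| ^ 3 + 144 * ε ^ 3 :=
        (abs_add_le _ _).trans (add_le_add (abs_arctan_sub_self_le _) hrem)
    _ ≤ (12 * ε) ^ 3 + 144 * ε ^ 3 := by gcongr
    _ = 1872 * K ^ 3 * t ^ 3 := by ring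

lemma exp_smul_mulVec_uvec {P : Matrix (Fin 2) (Fin 2) ℝ} (h : P.trace = 0) (t θ : ℝ) :
    NormedSpace.exp (t • P) *ᵥ uvec θ =
      (expEvenCoeff (t ^ 2 * (P 0 0 ^ 2 + P 0 1 * P 1 0)) -
          t * expOddCoeff (t ^ 2 * (P 0 0 ^ 2 + P 0 1 * P 1 0)) * deriv (pfun P) θ / 2) • uvec θ +
        (t * expOddCoeff (t ^ 2 * (P 0 0 ^ 2 + P 0 1 * P 1 0)) * pfun P θ) • uvec (θ + π / 2) := by
  have hsq : t • P * t • P = (t ^ 2 * (P 0 0 ^ 2 + P 0 1 * P 1 0)) • 1 := by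
    rw [smul_mul_smul_comm, Matrix.mul_self_eq_smul_one_of_trace_eq_zero h, smul_smul, ← sq]
  rw [NormedSpace.exp_eq_of_mul_self_eq_smul_one hsq, Matrix.add_mulVec, Matrix.smul_mulVec,
    Matrix.smul_mulVec, Matrix.one_mulVec, Matrix.smul_mulVec, mulVec_uvec_of_trace_eq_zero h]
  module

theorem projective_action_expansion_of_mul_le {P : Matrix (Fin 2) (Fin 2) ℝ}
    (htr : P.trace = 0) {K : ℝ} (hP : ∀ i j, |P i j| ≤ K) {t : ℝ} (ht : 0 ≤ t)
    (htK : t * K ≤ 1 / 16) (θ : ℝ) :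
    ∃ S₀, (∀ S, (|S - θ| < π / 2 ∧ ∃ c : ℝ, c ≠ 0 ∧
        NormedSpace.exp (t • P) *ᵥ uvec θ = c • uvec S) ↔ S = S₀) ∧
      |S₀ - θ - t * pfun P θ - t ^ 2 / 2 * pfun P θ * deriv (pfun P) θ| ≤ 1872 * K ^ 3 * t ^ 3 := by
  set μ := t ^ 2 * (P 0 0 ^ 2 + P 0 1 * P 1 0)
  have hK : 0 ≤ K := (abs_nonneg _).trans (hP 0 0)
  have hμ : |μ| ≤ 2 * (t * K) ^ 2 := by
    have hdet : |P 0 0 ^ 2 + P 0 1 * P 1 0| ≤ 2 * K ^ 2 := by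
      refine (abs_add_le _ _).trans ?_
      rw [abs_pow, abs_mul]
      nlinarith [hP 0 0, hP 0 1, hP 1 0, abs_nonneg (P 0 0), abs_nonneg (P 0 1)]
    calc |μ| = t ^ 2 * |P 0 0 ^ 2 + P 0 1 * P 1 0| := by rw [abs_mul, abs_of_nonneg (sq_nonneg t)]
      _ ≤ t ^ 2 * (2 * K ^ 2) := by gcongr
      _ = 2 * (t * K) ^ 2 := by ring
  have hμ1 : |μ| ≤ 1 := by nlinarith [mul_nonneg ht hK]
  obtain ⟨hx, hbound⟩ := half_le_and_abs_arctan_div_sub_le ht htK (abs_pfun_le hP θ)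
    (abs_deriv_pfun_le hP θ) ((abs_expEvenCoeff_sub_one_le hμ1).trans (by linarith))
    ((abs_expOddCoeff_sub_one_le hμ1).trans (by linarith))
  refine ⟨_, fun S => ?_, by rwa [add_sub_cancel_left]⟩
  rw [exp_smul_mulVec_uvec htr]
  exact exists_smul_uvec_eq_iff_eq_add_arctan (by linarith)

theorem projective_action_expansion_general (K : ℝ) :
    ∃ lam0 > (0 : ℝ), ∃ C > (0 : ℝ),
      ∀ P : Matrix (Fin 2) (Fin 2) ℝ, P.trace = 0 → (∀ i j, |P i j| ≤ K) →
      ∀ lam ∈ Set.Icc (0 : ℝ) lam0, ∀ θ : ℝ,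
        (∃! S : ℝ, |S - θ| < π / 2 ∧
          ∃ c : ℝ, c ≠ 0 ∧
            (NormedSpace.exp (lam • P)).mulVec (uvec θ) = c • uvec S) ∧
        ∀ S : ℝ, (|S - θ| < π / 2 ∧
            ∃ c : ℝ, c ≠ 0 ∧
              (NormedSpace.exp (lam • P)).mulVec (uvec θ) = c • uvec S) →
          |S - θ - lam * pfun P θ - lam ^ 2 / 2 * pfun P θ * deriv (pfun P) θ|
            ≤ C * lam ^ 3 := by
  refine ⟨1 / (16 * (|K| + 1)), by positivity, 1872 * (|K| + 1) ^ 3, by positivity, ?_⟩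
  rintro P htr hP lam ⟨hlam0, hlam⟩ θ
  have hK : 0 ≤ K := (abs_nonneg _).trans (hP 0 0)
  have hlamK : lam * K ≤ 1 / 16 := by
    rw [abs_of_nonneg hK, le_div_iff₀ (by positivity)] at hlam
    nlinarith
  obtain ⟨S₀, hS₀, hbound⟩ := projective_action_expansion_of_mul_le htr hP hlam0 hlamK θ
  refine ⟨⟨S₀, (hS₀ S₀).2 rfl, fun S hS => (hS₀ S).1 hS⟩, fun S hS => ?_⟩
  rw [(hS₀ S).1 hS]
  refine hbound.trans ?_
  rw [abs_of_nonneg hK]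
  gcongr
  linarith

/-- Perturbative expansion of the projective action
`S_{λP}` of `exp(λP)` on the circle, uniformly over traceless `P` with `‖P‖ ≤ K`. -/
theorem projective_action_expansion (K : ℝ) (hK : 0 < K) :
    ∃ lam0 > (0 : ℝ), ∃ C > (0 : ℝ),
      ∀ P : Matrix (Fin 2) (Fin 2) ℝ, P.trace = 0 → (∀ i j, |P i j| ≤ K) →
      ∀ lam ∈ Set.Icc (0 : ℝ) lam0, ∀ θ : ℝ,
        (∃! S : ℝ, |S - θ| < π / 2 ∧
          ∃ c : ℝ, c ≠ 0 ∧
            (NormedSpace.exp (lam • P)).mulVec (uvec θ) = c • uvec S) ∧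
        ∀ S : ℝ, (|S - θ| < π / 2 ∧
            ∃ c : ℝ, c ≠ 0 ∧
              (NormedSpace.exp (lam • P)).mulVec (uvec θ) = c • uvec S) →
          |S - θ - lam * pfun P θ - lam ^ 2 / 2 * pfun P θ * deriv (pfun P) θ|
            ≤ C * lam ^ 3 :=
  projective_action_expansion_general K

end
end

section
/- Let K > 0. There exist λ₀ > 0 and C > 0 such that for all traceless real 2×2 matrices P, Q with ‖P‖ ≤ K, ‖Q‖ ≤ K, every λ ∈ [0,λ₀] and every θ ∈ ℝ: | ‖exp(λP + λ²Q) e_θ‖² − 1 − 2λ⟨e_θ, P e_θ⟩ − λ²(2⟨e_θ, Q e_θ⟩ + ‖P e_θ‖² − det P) | ≤ C λ³. -/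
/-!
Put `T = λP + λ²Q`, so `‖T‖ = O(λ)`. Taylor's formula in the Banach algebra of operators gives
`exp T = 1 + T + T²/2 + O(‖T‖³)`, hence
`‖exp T v‖² = ‖v‖² + 2⟪v, T v⟫ + ⟪v, T² v⟫ + ‖T v‖² + O(λ³)`.
Up to `O(λ³)` one may replace `T²` by `λ²P²` and `‖T v‖²` by `λ²‖P v‖²`, and for a traceless
`2 × 2` matrix Cayley–Hamilton reads `P² = -det P • 1`. Every constant depends only on a bound
for `‖P‖` and `‖Q‖`, which the entrywise bound `K` provides.
-/

noncomputable section

/-- Euclidean inner product on `ℝ²`. -/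
def vdot (v w : Fin 2 → ℝ) : ℝ := v 0 * w 0 + v 1 * w 1

open NormedSpace WithLp
open scoped Nat RealInnerProductSpace

section NormedAlgebra

variable {𝔸 : Type*} [NormedRing 𝔸]

theorem norm_add_sq_sub_sq_le (a b : 𝔸) : ‖(a + b) ^ 2 - a ^ 2‖ ≤ ‖b‖ * (2 * ‖a‖ + ‖b‖) := by
  have h : (a + b) ^ 2 - a ^ 2 = a * b + b * a + b * b := by noncomm_ring
  rw [h]
  calc _ ≤ ‖a * b‖ + ‖b * a‖ + ‖b * b‖ := norm_add₃_le ..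
    _ ≤ ‖a‖ * ‖b‖ + ‖b‖ * ‖a‖ + ‖b‖ * ‖b‖ := by gcongr <;> exact norm_mul_le _ _
    _ = ‖b‖ * (2 * ‖a‖ + ‖b‖) := by ring

variable [NormedAlgebra ℝ 𝔸] [CompleteSpace 𝔸]

theorem norm_exp_sub_sum_range_le (a : 𝔸) {n : ℕ} (hn : 0 < n) :
    ‖exp a - ∑ k ∈ Finset.range n, (k !⁻¹ : ℝ) • a ^ k‖ ≤ ‖a‖ ^ n * Real.exp ‖a‖ := by
  set f : ℕ → 𝔸 := fun k => (k !⁻¹ : ℝ) • a ^ k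
  have htail : exp a - ∑ k ∈ Finset.range n, f k = ∑' k, f (k + n) := by
    rw [congrFun (exp_eq_tsum ℝ) a, ← (expSeries_summable' (𝕂 := ℝ) a).sum_add_tsum_nat_add n,
      add_sub_cancel_left]
  have hterm (k : ℕ) : ‖f (k + n)‖ ≤ ‖a‖ ^ n * (‖a‖ ^ k / k !) := calc
    ‖f (k + n)‖ ≤ ((k + n)! : ℝ)⁻¹ * ‖a‖ ^ (k + n) := by
      rw [norm_smul, Real.norm_of_nonneg (by positivity)]
      gcongr
      exact norm_pow_le' a (by omega)
    _ ≤ (k ! : ℝ)⁻¹ * ‖a‖ ^ (k + n) := by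
      gcongr
      omega
    _ = ‖a‖ ^ n * (‖a‖ ^ k / k !) := by ring
  have hexp : Real.exp ‖a‖ = ∑' k : ℕ, ‖a‖ ^ k / k ! := by
    rw [Real.exp_eq_exp_ℝ, exp_eq_tsum_div]
  rw [htail, hexp, ← tsum_mul_left]
  exact tsum_of_norm_bounded ((Real.summable_pow_div_factorial ‖a‖).mul_left _).hasSum hterm

theorem norm_exp_sub_one_sub_id_sub_half_sq_le (a : 𝔸) :
    ‖exp a - 1 - a - (2⁻¹ : ℝ) • a ^ 2‖ ≤ ‖a‖ ^ 3 * Real.exp ‖a‖ := by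
  have h := norm_exp_sub_sum_range_le a (n := 3) (by norm_num)
  rw [Finset.sum_range_succ, Finset.sum_range_succ, Finset.sum_range_one] at h
  simpa [Nat.factorial, sub_add_eq_sub_sub] using h

end NormedAlgebra

section InnerProductSpace

variable {E : Type*} [NormedAddCommGroup E] [InnerProductSpace ℝ E]

theorem abs_norm_add_sq_sub_norm_sq_le (x y : E) :
    |‖x + y‖ ^ 2 - ‖x‖ ^ 2| ≤ ‖y‖ * (2 * ‖x‖ + ‖y‖) := by
  have hxy := abs_real_inner_le_norm x y
  rw [norm_add_sq_real, abs_le]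
  constructor <;> nlinarith [abs_le.mp hxy]

theorem norm_add_add_half_smul_sq (v u w : E) :
    ‖v + u + (2⁻¹ : ℝ) • w‖ ^ 2
      = ‖v‖ ^ 2 + 2 * ⟪v, u⟫ + ⟪v, w⟫ + ‖u‖ ^ 2 + (⟪u, w⟫ + ‖w‖ ^ 2 / 4) := by
  simp only [← real_inner_self_eq_norm_sq, inner_add_left, inner_add_right, real_inner_smul_left,
    real_inner_smul_right, real_inner_comm u v, real_inner_comm w v, real_inner_comm w u]
  ring

variable [CompleteSpace E]

theorem abs_norm_exp_apply_sq_sub_le {T : E →L[ℝ] E} (hT : ‖T‖ ≤ 1) (v : E) :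
    |‖exp T v‖ ^ 2 - (‖v‖ ^ 2 + 2 * ⟪v, T v⟫ + ⟪v, (T ^ 2) v⟫ + ‖T v‖ ^ 2)|
      ≤ 26 * ‖T‖ ^ 3 * ‖v‖ ^ 2 := by
  set t := ‖T‖
  set x := ‖v‖
  set R := exp T - 1 - T - (2⁻¹ : ℝ) • T ^ 2
  set s := v + T v + (2⁻¹ : ℝ) • (T ^ 2) v
  have ht : 0 ≤ t := norm_nonneg T
  have hx : 0 ≤ x := norm_nonneg v
  have ht3 : t ^ 3 ≤ 1 := pow_le_one₀ ht hT
  have hR : ‖R‖ ≤ 3 * t ^ 3 := by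
    have hexp : Real.exp t ≤ 3 :=
      (Real.exp_le_exp.mpr hT).trans (Real.exp_one_lt_d9.le.trans (by norm_num))
    calc ‖R‖ ≤ t ^ 3 * Real.exp t := norm_exp_sub_one_sub_id_sub_half_sq_le T
      _ ≤ 3 * t ^ 3 := by nlinarith [pow_nonneg ht 3]
  have hTv : ‖T v‖ ≤ t * x := T.le_opNorm v
  have hT2v : ‖(T ^ 2) v‖ ≤ t ^ 2 * x :=
    ((T ^ 2).le_opNorm v).trans (by gcongr; exact norm_pow_le' T two_pos)
  have hRv : ‖R v‖ ≤ 3 * t ^ 3 * x := (R.le_opNorm v).trans (by gcongr)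
  have hs : ‖s‖ ≤ 5 / 2 * x := by
    refine (norm_add₃_le ..).trans ?_
    rw [norm_smul, Real.norm_of_nonneg (by norm_num)]
    nlinarith [pow_le_one₀ (n := 2) ht hT]
  have hexp_sq : |‖exp T v‖ ^ 2 - ‖s‖ ^ 2| ≤ 24 * t ^ 3 * x ^ 2 := by
    have hsplit : exp T v = s + R v := by simp [R, s]
    rw [hsplit]
    calc _ ≤ 3 * t ^ 3 * x * (2 * (5 / 2 * x) + 3 * t ^ 3 * x) :=
          (abs_norm_add_sq_sub_norm_sq_le _ _).trans (by gcongr)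
      _ ≤ 24 * t ^ 3 * x ^ 2 := by
          nlinarith [mul_le_mul_of_nonneg_right ht3 (by positivity : 0 ≤ t ^ 3 * x ^ 2)]
  have hs_sq : |‖s‖ ^ 2 - (x ^ 2 + 2 * ⟪v, T v⟫ + ⟪v, (T ^ 2) v⟫ + ‖T v‖ ^ 2)|
      ≤ 2 * t ^ 3 * x ^ 2 := by
    rw [norm_add_add_half_smul_sq, add_sub_cancel_left]
    have hinner : |⟪T v, (T ^ 2) v⟫| ≤ t * x * (t ^ 2 * x) :=
      (abs_real_inner_le_norm _ _).trans (by gcongr)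
    have hsq : ‖(T ^ 2) v‖ ^ 2 ≤ (t ^ 2 * x) ^ 2 := by gcongr
    calc _ ≤ |⟪T v, (T ^ 2) v⟫| + ‖(T ^ 2) v‖ ^ 2 / 4 := by
          refine (abs_add_le _ _).trans_eq ?_
          rw [abs_of_nonneg (a := ‖(T ^ 2) v‖ ^ 2 / 4) (by positivity)]
      _ ≤ 2 * t ^ 3 * x ^ 2 := by nlinarith [pow_nonneg ht 3, sq_nonneg x]
  calc _ ≤ _ := abs_sub_le _ (‖s‖ ^ 2) _
    _ ≤ 24 * t ^ 3 * x ^ 2 + 2 * t ^ 3 * x ^ 2 := add_le_add hexp_sq hs_sq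
    _ = 26 * t ^ 3 * x ^ 2 := by ring

theorem abs_norm_exp_smul_add_sq_smul_apply_sq_sub_le {P Q : E →L[ℝ] E} {c B lam : ℝ}
    (hP : P ^ 2 = c • 1) (hPB : ‖P‖ ≤ B) (hQB : ‖Q‖ ≤ B) (hlam0 : 0 ≤ lam) (hlam1 : lam ≤ 1)
    (hBlam : 2 * B * lam ≤ 1) (v : E) :
    |‖exp (lam • P + lam ^ 2 • Q) v‖ ^ 2 - ‖v‖ ^ 2 - 2 * lam * ⟪v, P v⟫
        - lam ^ 2 * (2 * ⟪v, Q v⟫ + ‖P v‖ ^ 2 + c * ‖v‖ ^ 2)|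
      ≤ (208 * B ^ 3 + 6 * B ^ 2) * lam ^ 3 * ‖v‖ ^ 2 := by
  set T := lam • P + lam ^ 2 • Q
  set x := ‖v‖
  have hB : 0 ≤ B := (norm_nonneg P).trans hPB
  have hx : 0 ≤ x := norm_nonneg v
  have hlam21 : lam ^ 2 ≤ lam := by nlinarith
  have hlP : ‖lam • P‖ ≤ B * lam := by
    rw [norm_smul, Real.norm_of_nonneg hlam0, mul_comm]; gcongr
  have hlQ : ‖lam ^ 2 • Q‖ ≤ B * lam ^ 2 := by
    rw [norm_smul, Real.norm_of_nonneg (by positivity), mul_comm]; gcongr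
  have hT : ‖T‖ ≤ 2 * B * lam := (norm_add_le _ _).trans (by nlinarith)
  have hexp := abs_norm_exp_apply_sq_sub_le (hT.trans hBlam) v
  have hlin : ⟪v, T v⟫ = lam * ⟪v, P v⟫ + lam ^ 2 * ⟪v, Q v⟫ := by
    simp [T, inner_add_right, inner_smul_right]
  have hsq : |⟪v, (T ^ 2) v⟫ - lam ^ 2 * c * x ^ 2| ≤ 3 * B ^ 2 * lam ^ 3 * x ^ 2 := by
    have hP' : ⟪v, ((lam • P) ^ 2) v⟫ = lam ^ 2 * c * x ^ 2 := by
      simp only [smul_pow, hP, smul_apply, one_apply_eq_self, inner_smul_right,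
        real_inner_self_eq_norm_sq, x]
      ring
    have hD : ‖T ^ 2 - (lam • P) ^ 2‖ ≤ 3 * B ^ 2 * lam ^ 3 := calc
      _ ≤ ‖lam ^ 2 • Q‖ * (2 * ‖lam • P‖ + ‖lam ^ 2 • Q‖) := norm_add_sq_sub_sq_le _ _
      _ ≤ B * lam ^ 2 * (2 * (B * lam) + B * lam ^ 2) := by gcongr
      _ ≤ 3 * B ^ 2 * lam ^ 3 := by
          nlinarith [mul_le_mul_of_nonneg_left hlam21 (by positivity : 0 ≤ B ^ 2 * lam ^ 2)]
    rw [← hP', ← inner_sub_right, ← sub_apply]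
    calc _ ≤ x * ‖(T ^ 2 - (lam • P) ^ 2) v‖ := abs_real_inner_le_norm _ _
      _ ≤ x * (3 * B ^ 2 * lam ^ 3 * x) := by
          gcongr
          exact ((T ^ 2 - (lam • P) ^ 2).le_opNorm v).trans (by gcongr)
      _ = _ := by ring
  have hnorm : |‖T v‖ ^ 2 - lam ^ 2 * ‖P v‖ ^ 2| ≤ 3 * B ^ 2 * lam ^ 3 * x ^ 2 := by
    have hPv : ‖(lam • P) v‖ ≤ B * lam * x := ((lam • P).le_opNorm v).trans (by gcongr)
    have hQv : ‖(lam ^ 2 • Q) v‖ ≤ B * lam ^ 2 * x :=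
      ((lam ^ 2 • Q).le_opNorm v).trans (by gcongr)
    have hPv_sq : lam ^ 2 * ‖P v‖ ^ 2 = ‖(lam • P) v‖ ^ 2 := by
      rw [smul_apply, norm_smul, Real.norm_of_nonneg hlam0]; ring
    rw [hPv_sq]
    calc _ ≤ ‖(lam ^ 2 • Q) v‖ * (2 * ‖(lam • P) v‖ + ‖(lam ^ 2 • Q) v‖) :=
          abs_norm_add_sq_sub_norm_sq_le _ _
      _ ≤ B * lam ^ 2 * x * (2 * (B * lam * x) + B * lam ^ 2 * x) := by gcongr
      _ ≤ 3 * B ^ 2 * lam ^ 3 * x ^ 2 := by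
          nlinarith [mul_le_mul_of_nonneg_left hlam21 (by positivity : 0 ≤ B ^ 2 * lam ^ 2 * x ^ 2)]
  have hT3 : ‖T‖ ^ 3 ≤ (2 * B * lam) ^ 3 := pow_le_pow_left₀ (norm_nonneg _) hT 3
  calc _ = |(‖exp T v‖ ^ 2 - (x ^ 2 + 2 * ⟪v, T v⟫ + ⟪v, (T ^ 2) v⟫ + ‖T v‖ ^ 2))
          + (⟪v, (T ^ 2) v⟫ - lam ^ 2 * c * x ^ 2) + (‖T v‖ ^ 2 - lam ^ 2 * ‖P v‖ ^ 2)| := by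
        rw [hlin]; ring_nf
    _ ≤ 26 * ‖T‖ ^ 3 * x ^ 2 + 3 * B ^ 2 * lam ^ 3 * x ^ 2 + 3 * B ^ 2 * lam ^ 3 * x ^ 2 :=
        (abs_add_three _ _ _).trans (by gcongr)
    _ ≤ 26 * (2 * B * lam) ^ 3 * x ^ 2 + 3 * B ^ 2 * lam ^ 3 * x ^ 2
          + 3 * B ^ 2 * lam ^ 3 * x ^ 2 := by gcongr
    _ = _ := by ring

end InnerProductSpace

namespace Matrix

theorem sq_eq_neg_det_smul_one_of_trace_eq_zero {R : Type*} [CommRing R]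
    {A : Matrix (Fin 2) (Fin 2) R} (hA : A.trace = 0) : A ^ 2 = -A.det • 1 := by
  have h11 : A 1 1 = -A 0 0 := by rw [trace_fin_two] at hA; linear_combination hA
  ext i j
  fin_cases i <;> fin_cases j <;> simp [sq, mul_apply, Fin.sum_univ_two, det_fin_two, h11] <;> ring

variable {n : Type*} [Fintype n] [DecidableEq n]

theorem norm_toEuclideanCLM_le_sqrt_sum_sq (A : Matrix n n ℝ) :
    ‖toEuclideanCLM (𝕜 := ℝ) A‖ ≤ √(∑ i, ∑ j, A i j ^ 2) := by
  refine (toEuclideanCLM (𝕜 := ℝ) A).opNorm_le_bound (Real.sqrt_nonneg _) fun x => ?_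
  rw [← sq_le_sq₀ (norm_nonneg _) (by positivity), mul_pow, Real.sq_sqrt (by positivity),
    EuclideanSpace.real_norm_sq_eq, EuclideanSpace.real_norm_sq_eq, Finset.sum_mul]
  gcongr with i
  exact Finset.sum_mul_sq_le_sq_mul_sq _ _ _

theorem norm_toEuclideanCLM_le_card_mul {A : Matrix n n ℝ} {K : ℝ} (hK : 0 ≤ K)
    (hA : ∀ i j, |A i j| ≤ K) : ‖toEuclideanCLM (𝕜 := ℝ) A‖ ≤ Fintype.card n * K := by
  refine (norm_toEuclideanCLM_le_sqrt_sum_sq A).trans (Real.sqrt_le_iff.mpr ⟨by positivity, ?_⟩)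
  calc ∑ i, ∑ j, A i j ^ 2 ≤ ∑ _i : n, ∑ _j : n, K ^ 2 := by
        gcongr ∑ i, ∑ j, ?_ with i _ j
        exact sq_le_sq' (abs_le.mp (hA i j)).1 (abs_le.mp (hA i j)).2
    _ = (Fintype.card n * K) ^ 2 := by
        simp only [Finset.sum_const, Finset.card_univ, nsmul_eq_mul]
        ring

-- `map_exp_of_mem_ball` wants a normed ring structure on the matrices; `exp` does not depend on it.
open scoped Matrix.Norms.L2Operator in
theorem toEuclideanCLM_exp (A : Matrix n n ℝ) :
    toEuclideanCLM (𝕜 := ℝ) (exp A) = exp (toEuclideanCLM (𝕜 := ℝ) A) :=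
  map_exp_of_mem_ball (𝕂 := ℝ) toEuclideanCLM
    (toEuclideanCLM (𝕜 := ℝ) (n := n)).toAlgEquiv.toLinearMap.continuous_of_finiteDimensional A
    ((expSeries_radius_eq_top ℝ (Matrix n n ℝ)).symm ▸ edist_lt_top _ _)

end Matrix

theorem vnorm_eq_norm_toLp (v : Fin 2 → ℝ) : vnorm v = ‖toLp 2 v‖ := by
  simp [vnorm, EuclideanSpace.norm_eq, Fin.sum_univ_two]

theorem vdot_eq_inner (v w : Fin 2 → ℝ) : vdot v w = ⟪toLp 2 v, toLp 2 w⟫ := by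
  simp only [vdot, PiLp.inner_apply, RCLike.inner_apply, Real.ringHom_apply, Fin.sum_univ_two]
  ring

theorem norm_toLp_uvec (θ : ℝ) : ‖toLp 2 (uvec θ)‖ = 1 := by
  simp [← vnorm_eq_norm_toLp, vnorm, uvec]

/-- Second order expansion of `‖exp(λP + λ²Q) e_θ‖²`, uniformly
over traceless `P, Q` with entries bounded by `K` and `θ ∈ ℝ`. -/
theorem norm_sq_expansion (K : ℝ) (hK : 0 < K) :
    ∃ lam0 > (0 : ℝ), ∃ C > (0 : ℝ),
      ∀ P Q : Matrix (Fin 2) (Fin 2) ℝ, P.trace = 0 → Q.trace = 0 →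
      (∀ i j, |P i j| ≤ K) → (∀ i j, |Q i j| ≤ K) →
      ∀ lam ∈ Set.Icc (0 : ℝ) lam0, ∀ θ : ℝ,
        |vnorm ((NormedSpace.exp (lam • P + lam ^ 2 • Q)).mulVec (uvec θ)) ^ 2
            - 1 - 2 * lam * vdot (uvec θ) (P.mulVec (uvec θ))
            - lam ^ 2 * (2 * vdot (uvec θ) (Q.mulVec (uvec θ))
                + vnorm (P.mulVec (uvec θ)) ^ 2 - P.det)|
          ≤ C * lam ^ 3 := by
  refine ⟨min 1 (1 / (4 * K)), by positivity, 208 * (2 * K) ^ 3 + 6 * (2 * K) ^ 2, by positivity,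
    ?_⟩
  rintro P Q hP - hPK hQK lam ⟨hlam0, hlam⟩ θ
  have hnorm {A : Matrix (Fin 2) (Fin 2) ℝ} (hA : ∀ i j, |A i j| ≤ K) :
      ‖Matrix.toEuclideanCLM (𝕜 := ℝ) A‖ ≤ 2 * K := by
    simpa using Matrix.norm_toEuclideanCLM_le_card_mul hK.le hA
  have hlamK : 2 * (2 * K) * lam ≤ 1 := by
    have := hlam.trans (min_le_right _ _)
    rw [le_div_iff₀ (by positivity)] at this
    linarith
  have key := abs_norm_exp_smul_add_sq_smul_apply_sq_sub_le (c := -P.det)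
    (by rw [← map_pow, Matrix.sq_eq_neg_det_smul_one_of_trace_eq_zero hP, map_smul, map_one])
    (hnorm hPK) (hnorm hQK) hlam0 (hlam.trans (min_le_left _ _)) hlamK (toLp 2 (uvec θ))
  rw [← map_smul, ← map_smul, ← map_add, ← Matrix.toEuclideanCLM_exp] at key
  simpa [vnorm_eq_norm_toLp, vdot_eq_inner, norm_toLp_uvec, sub_eq_add_neg] using key

end
end
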